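/- arXiv:1801.02275 — 4 statements merged into one kernel-verified Lean document; each statement's English description precedes it below -/
import Mathlib

section
/- (Theorem 3.3(1), existence) If h = f, then the basis vector e(0,1,0) of M satisfies A₋ e(0,1,0) = c₊ e(0,1,0) = c₋ e(0,1,0) = 0; that is, e(0,1,0) is a singular vector at level 1 of the Verma module M(h,f). -/
/-!
Verma module `M(h,f)` over the ℤ₂×ℤ₂ graded superalgebra of Rittenberg–Wyler,
realized on the space of finitely supported functions `ℕ × Fin 2 × Fin 2 →₀ ℂ`,
with basis vectors `e k μ ν`.
-/

noncomputable section

/-- Index set for the basis of the Verma module. -/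
abbrev Idx : Type := ℕ × Fin 2 × Fin 2

/-- The underlying space of the Verma module `M(h,f)`. -/
abbrev Mmod : Type := Idx →₀ ℂ

/-- The standard basis vector `e(k,μ,ν)`. -/
def e (k : ℕ) (μ ν : Fin 2) : Mmod := Finsupp.single (k, μ, ν) 1

/-- Build a linear operator on `Mmod` from its values on basis vectors. -/
def mkOp (φ : Idx → Mmod) : Mmod →ₗ[ℂ] Mmod := Finsupp.lift Mmod ℂ Idx φ

/-- The lowering operator `A₋`.
`A₋ e(k,μ,ν) = 4k(h+k+μ+ν−1)·e(k−1,μ,ν) + 4(h+f)·δ_{μ,1}δ_{ν,1}·e(k,0,0)`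
(with the convention `e(−1,μ,ν) = 0`, automatic since the coefficient vanishes at `k = 0`). -/
def Am (h f : ℂ) : Mmod →ₗ[ℂ] Mmod :=
  mkOp fun p =>
    (4 * (p.1 : ℂ) * (h + (p.1 : ℂ) + ((p.2.1 : ℕ) : ℂ) + ((p.2.2 : ℕ) : ℂ) - 1))
        • e (p.1 - 1) p.2.1 p.2.2
    + (if p.2.1 = 1 ∧ p.2.2 = 1 then (4 * (h + f)) • e p.1 0 0 else 0)

/-- The lowering operator `c₊`.
`c₊ e(k,μ,ν) = 2(h+2k+2ν−f)·δ_{μ,1}·e(k,0,ν) + (−1)^μ·2k·δ_{ν,0}·e(k−1,μ,1)`. -/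
def cp (h f : ℂ) : Mmod →ₗ[ℂ] Mmod :=
  mkOp fun p =>
    (if p.2.1 = 1 then
        (2 * (h + 2 * (p.1 : ℂ) + 2 * ((p.2.2 : ℕ) : ℂ) - f)) • e p.1 0 p.2.2 else 0)
    + (if p.2.2 = 0 then
        ((-1 : ℂ) ^ (p.2.1 : ℕ) * (2 * (p.1 : ℂ))) • e (p.1 - 1) p.2.1 1 else 0)

/-- The lowering operator `c₋`.
`c₋ e(k,μ,ν) = (−1)^μ·2(h+f)·δ_{ν,1}·e(k,μ,0) + 2k·δ_{μ,0}·e(k−1,1,ν)`. -/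
def cm (h f : ℂ) : Mmod →ₗ[ℂ] Mmod :=
  mkOp fun p =>
    (if p.2.2 = 1 then
        ((-1 : ℂ) ^ (p.2.1 : ℕ) * (2 * (h + f))) • e p.1 p.2.1 0 else 0)
    + (if p.2.1 = 0 then (2 * (p.1 : ℂ)) • e (p.1 - 1) 1 p.2.2 else 0)

/-- The raising operator `A₊`: `A₊ e(k,μ,ν) = e(k+1,μ,ν)`. -/
def Ap : Mmod →ₗ[ℂ] Mmod := mkOp fun p => e (p.1 + 1) p.2.1 p.2.2

/-- The raising operator `d₊`: `d₊ e(k,μ,ν) = δ_{μ,0}·e(k,1,ν)`. -/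
def dp : Mmod →ₗ[ℂ] Mmod := mkOp fun p => if p.2.1 = 0 then e p.1 1 p.2.2 else 0

/-- The raising operator `d₋`:
`d₋ e(k,μ,ν) = (−1)^μ·δ_{ν,0}·e(k,μ,1) + 2·δ_{μ,1}·e(k+1,0,ν)`. -/
def dm : Mmod →ₗ[ℂ] Mmod :=
  mkOp fun p =>
    (if p.2.2 = 0 then ((-1 : ℂ) ^ (p.2.1 : ℕ)) • e p.1 p.2.1 1 else 0)
    + (if p.2.1 = 1 then (2 : ℂ) • e (p.1 + 1) 0 p.2.2 else 0)

/-- The Cartan operator `N`: `N e(k,μ,ν) = (h+2k+μ+ν)·e(k,μ,ν)`. -/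
def Nop (h : ℂ) : Mmod →ₗ[ℂ] Mmod :=
  mkOp fun p =>
    (h + 2 * (p.1 : ℂ) + ((p.2.1 : ℕ) : ℂ) + ((p.2.2 : ℕ) : ℂ)) • e p.1 p.2.1 p.2.2

/-- The Cartan operator `F̃`: `F̃ e(k,μ,ν) = (f+μ−ν)·e(k,μ,ν)`. -/
def Fop (f : ℂ) : Mmod →ₗ[ℂ] Mmod :=
  mkOp fun p =>
    (f + ((p.2.1 : ℕ) : ℂ) - ((p.2.2 : ℕ) : ℂ)) • e p.1 p.2.1 p.2.2

/-- The set of basis vectors of level `m` (the level of `e(k,μ,ν)` is `2k+μ+ν`). -/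
def levelVecs (m : ℕ) : Set Mmod :=
  {v | ∃ (k : ℕ) (μ ν : Fin 2), 2 * k + (μ : ℕ) + (ν : ℕ) = m ∧ v = e k μ ν}

/-- `v` is a singular vector at level `m ≥ 1`: it is nonzero, lies in the span of the
level-`m` basis vectors, and is annihilated by `A₋`, `c₊` and `c₋`. -/
def IsSingular (h f : ℂ) (m : ℕ) (v : Mmod) : Prop :=
  1 ≤ m ∧ v ≠ 0 ∧ v ∈ Submodule.span ℂ (levelVecs m) ∧
    Am h f v = 0 ∧ cp h f v = 0 ∧ cm h f v = 0

/-! On `e(0,1,0)` every term of `A₋` and `c₋` carries a factor `k = 0` or a Kronecker delta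
that vanishes, while `c₊` sends it to `2(h−f)·e(0,0,0)`: this is where `h = f` enters. -/

theorem mkOp_e (φ : Idx → Mmod) (k : ℕ) (μ ν : Fin 2) :
    mkOp φ (e k μ ν) = φ (k, μ, ν) := by
  simp [mkOp, e]

theorem e_ne_zero (k : ℕ) (μ ν : Fin 2) : e k μ ν ≠ 0 := by
  simp [e]

theorem e_mem_span_levelVecs (k : ℕ) (μ ν : Fin 2) :
    e k μ ν ∈ Submodule.span ℂ (levelVecs (2 * k + μ + ν)) :=
  Submodule.subset_span ⟨k, μ, ν, rfl, rfl⟩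

theorem Am_e_zero_one_zero (h f : ℂ) : Am h f (e 0 1 0) = 0 := by
  simp [Am, mkOp_e]

theorem cm_e_zero_one_zero (h f : ℂ) : cm h f (e 0 1 0) = 0 := by
  simp [cm, mkOp_e]

theorem cp_e_zero_one_zero (h f : ℂ) : cp h f (e 0 1 0) = (2 * (h - f)) • e 0 0 0 := by
  simp [cp, mkOp_e, sub_eq_add_neg]

/-- Theorem 3.3(1), existence: if `h = f` then `e(0,1,0)` is annihilated by
`A₋`, `c₊`, `c₋`, i.e. it is a singular vector at level 1 of `M(h,f)`. -/
theorem singular_vector_hf (h f : ℂ) (hhf : h = f) :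
    Am h f (e 0 1 0) = 0 ∧ cp h f (e 0 1 0) = 0 ∧ cm h f (e 0 1 0) = 0 ∧
      IsSingular h f 1 (e 0 1 0) := by
  have hcp : cp h f (e 0 1 0) = 0 := by
    rw [cp_e_zero_one_zero, hhf, sub_self, mul_zero, zero_smul]
  exact ⟨Am_e_zero_one_zero h f, hcp, cm_e_zero_one_zero h f, le_rfl, e_ne_zero 0 1 0,
    e_mem_span_levelVecs 0 1 0, Am_e_zero_one_zero h f, hcp, cm_e_zero_one_zero h f⟩
end
end

section
/- (Theorem 3.3(2), existence) If h = −f, then the basis vector e(0,0,1) of M satisfies A₋ e(0,0,1) = c₊ e(0,0,1) = c₋ e(0,0,1) = 0; that is, e(0,0,1) is a singular vector at level 1 of the Verma module M(h,f). -/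
/-!
Verma module `M(h,f)` over the ℤ₂×ℤ₂ graded superalgebra of Rittenberg–Wyler,
realized on the space of finitely supported functions `ℕ × Fin 2 × Fin 2 →₀ ℂ`,
with basis vectors `e k μ ν`.
-/

noncomputable section

theorem Am_e_zero (h f : ℂ) {μ ν : Fin 2} (hμν : ¬(μ = 1 ∧ ν = 1)) : Am h f (e 0 μ ν) = 0 := by
  simp [Am, mkOp_e, hμν]

theorem cp_e_zero_zero (h f : ℂ) (ν : Fin 2) : cp h f (e 0 0 ν) = 0 := by
  simp [cp, mkOp_e]

theorem cm_e_zero_zero_one (h f : ℂ) : cm h f (e 0 0 1) = (2 * (h + f)) • e 0 0 0 := by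
  simp [cm, mkOp_e]

/-- Theorem 3.3(2), existence: if `h = -f` then `e(0,0,1)` is annihilated by
`A₋`, `c₊`, `c₋`, i.e. it is a singular vector at level 1 of `M(h,f)`. -/
theorem singular_vector_h_neg_f (h f : ℂ) (hhf : h = -f) :
    Am h f (e 0 0 1) = 0 ∧ cp h f (e 0 0 1) = 0 ∧ cm h f (e 0 0 1) = 0 ∧
      IsSingular h f 1 (e 0 0 1) := by
  have hA : Am h f (e 0 0 1) = 0 := Am_e_zero h f (by decide)
  have hc : cp h f (e 0 0 1) = 0 := cp_e_zero_zero h f 1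
  have hm : cm h f (e 0 0 1) = 0 := by simp [cm_e_zero_zero_one, hhf]
  exact ⟨hA, hc, hm, le_rfl, e_ne_zero 0 0 1, e_mem_span_levelVecs 0 0 1, hA, hc, hm⟩
end
end

section
/- (Corollary 3.4: irreducibility of the Verma module) Suppose h ≠ f, h ≠ −f, and for every positive integer n either h ≠ −n or f = n. Then the only subspaces of M that are invariant under all eight operators N, F̃, A₊, A₋, c₊, c₋, d₊, d₋ are the zero subspace and M itself. -/
/-!
Verma module `M(h,f)` over the ℤ₂×ℤ₂ graded superalgebra of Rittenberg–Wyler,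
realized on the space of finitely supported functions `ℕ × Fin 2 × Fin 2 →₀ ℂ`,
with basis vectors `e k μ ν`.
-/

noncomputable section

/-! The diagonal operators `N` and `F̃` let an invariant subspace `p` contain the weight
components of each of its vectors, and the weight spaces are spanned by `e(0,0,0)`, by single
vectors `e(k,0,1)`, `e(k,1,0)`, or by the pair `e(k+1,0,0)`, `e(k,1,1)`. A nonzero weight vector
other than a multiple of `e(0,0,0)` is sent by `c₊` or `c₋` to a nonzero vector of lower level:
for `e(k,0,1)` since `h + f ≠ 0`, for `e(k,1,0)` since `h ≠ f`, and on the pair because there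
the kernels of `c₊` and `c₋` meet only in `0` once `h ≠ -(k+1)`. Descending in level, `p`
contains `e(0,0,0)`, and `A₊`, `d₊`, `d₋` generate every basis vector from it. -/

open Finsupp Submodule

theorem Submodule.filter_mem_of_diagonal {K α : Type*} [Field K] [DecidableEq K] {c : α → K}
    {T : (α →₀ K) →ₗ[K] α →₀ K} (hT : ∀ v j, T v j = c j * v j)
    {p : Submodule K (α →₀ K)} (hp : ∀ v ∈ p, T v ∈ p) {v : α →₀ K} (hv : v ∈ p)
    (a : K) : v.filter (fun j => c j = a) ∈ p := by
  suffices key : ∀ (S : Finset K) (v : α →₀ K), v ∈ p →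
      (∀ j ∈ v.support, c j ∈ insert a S) → v.filter (fun j => c j = a) ∈ p from
    key (v.support.image c) v hv fun j hj =>
      Finset.mem_insert_of_mem (Finset.mem_image_of_mem c hj)
  intro S
  induction S using Finset.induction_on with
  | empty =>
    intro v hv hS
    rwa [(filter_eq_self_iff _ _).2 fun j hj => by simpa using hS j (mem_support_iff.2 hj)]
  | insert b S _ ih =>
    intro v hv hS
    by_cases hba : b = a
    · subst hba
      exact ih v hv (by simpa using hS)
    -- `T - b` annihilates the eigenvalue `b` and rescales the `a`-component by `a - b ≠ 0`.
    have hw : ∀ j ∈ (T v - b • v).support, c j ∈ insert a S := by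
      intro j hj
      have hj' : (c j - b) * v j ≠ 0 := by simpa [hT, sub_mul] using hj
      have := hS j (mem_support_iff.2 (right_ne_zero_of_mul hj'))
      simp_all [sub_eq_zero]
    have := p.smul_mem (a - b)⁻¹ (ih _ (sub_mem (hp v hv) (p.smul_mem b hv)) hw)
    convert this using 1
    ext j
    simp only [filter_apply, Finsupp.smul_apply, Finsupp.sub_apply, hT, smul_eq_mul]
    split_ifs with hj
    · rw [hj, ← sub_mul, inv_mul_cancel_left₀ (sub_ne_zero.2 (Ne.symm hba))]
    · rw [mul_zero]

namespace Verma

def level (i : Idx) : ℕ := 2 * i.1 + i.2.1 + i.2.2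

def charge (i : Idx) : ℤ := (i.2.1 : ℤ) - i.2.2

def weightClass (i : Idx) : Set Idx := {j | level j = level i ∧ charge j = charge i}

lemma mkOp_single (φ : Idx → Mmod) (i : Idx) (a : ℂ) : mkOp φ (single i a) = a • φ i := by
  simp [mkOp]

lemma mkOp_e (φ : Idx → Mmod) (k : ℕ) (μ ν : Fin 2) :
    mkOp φ (e k μ ν) = φ (k, μ, ν) := by
  rw [e, mkOp_single, one_smul]

lemma mkOp_diagonal_apply (c : Idx → ℂ) (v : Mmod) (j : Idx) :
    mkOp (fun i => c i • e i.1 i.2.1 i.2.2) v j = c j * v j := by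
  induction v using Finsupp.induction_linear with
  | zero => simp
  | add v w hv hw => simp [hv, hw, mul_add]
  | single i a =>
    rw [mkOp_single]
    by_cases hij : i = j
    · subst hij; simp [e, mul_comm]
    · simp [e, hij]

lemma Nop_apply (h : ℂ) (v : Mmod) (j : Idx) : Nop h v j = (h + level j) * v j := by
  rw [Nop, mkOp_diagonal_apply]
  simp [level, add_assoc]

lemma Fop_apply (f : ℂ) (v : Mmod) (j : Idx) : Fop f v j = (f + charge j) * v j := by
  rw [Fop, mkOp_diagonal_apply]
  simp [charge, add_sub_assoc]

lemma Ap_e (k : ℕ) (μ ν : Fin 2) : Ap (e k μ ν) = e (k + 1) μ ν := mkOp_e _ _ _ _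

lemma dp_e0 (k : ℕ) (ν : Fin 2) : dp (e k 0 ν) = e k 1 ν := by simp [dp, mkOp_e]

lemma dm_e00 (k : ℕ) : dm (e k 0 0) = e k 0 1 := by simp [dm, mkOp_e]

lemma cm_e01 (h f : ℂ) (k : ℕ) :
    cm h f (e k 0 1) = (2 * (h + f)) • e k 0 0 + (2 * k : ℂ) • e (k - 1) 1 1 := by
  simp [cm, mkOp_e]

lemma cp_e10 (h f : ℂ) (k : ℕ) :
    cp h f (e k 1 0) = (2 * (h + 2 * k - f)) • e k 0 0 + (-(2 * k : ℂ)) • e (k - 1) 1 1 := by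
  simp [cp, mkOp_e]

lemma cp_e00_succ (h f : ℂ) (k : ℕ) :
    cp h f (e (k + 1) 0 0) = (2 * (k + 1) : ℂ) • e k 0 1 := by
  simp [cp, mkOp_e]

lemma cp_e11 (h f : ℂ) (k : ℕ) : cp h f (e k 1 1) = (2 * (h + 2 * k + 2 - f)) • e k 0 1 := by
  simp [cp, mkOp_e]

lemma cm_e00_succ (h f : ℂ) (k : ℕ) :
    cm h f (e (k + 1) 0 0) = (2 * (k + 1) : ℂ) • e k 1 0 := by
  simp [cm, mkOp_e]

lemma cm_e11 (h f : ℂ) (k : ℕ) : cm h f (e k 1 1) = (-(2 * (h + f))) • e k 1 0 := by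
  simp [cm, mkOp_e]

lemma weightClass_zero : weightClass (0, 0, 0) = {(0, 0, 0)} := by
  ext ⟨j, μ, ν⟩; fin_cases μ <;> fin_cases ν <;> simp [weightClass, level, charge]

lemma weightClass_e01 (k : ℕ) : weightClass (k, 0, 1) = {(k, 0, 1)} := by
  ext ⟨j, μ, ν⟩; fin_cases μ <;> fin_cases ν <;> simp [weightClass, level, charge]

lemma weightClass_e10 (k : ℕ) : weightClass (k, 1, 0) = {(k, 1, 0)} := by
  ext ⟨j, μ, ν⟩; fin_cases μ <;> fin_cases ν <;> simp [weightClass, level, charge]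

lemma weightClass_e11 (k : ℕ) : weightClass (k, 1, 1) = {(k + 1, 0, 0), (k, 1, 1)} := by
  ext ⟨j, μ, ν⟩
  fin_cases μ <;> fin_cases ν <;> (simp [weightClass, level, charge]; try omega)

lemma weightClass_e00_succ (k : ℕ) : weightClass (k + 1, 0, 0) = {(k + 1, 0, 0), (k, 1, 1)} := by
  ext ⟨j, μ, ν⟩
  fin_cases μ <;> fin_cases ν <;> (simp [weightClass, level, charge]; try omega)

lemma smul_e_mem_supported {s : Set Idx} {c : ℂ} {k : ℕ} {μ ν : Fin 2}
    (hs : c ≠ 0 → (k, μ, ν) ∈ s) : c • e k μ ν ∈ supported ℂ ℂ s := by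
  by_cases hc : c = 0
  · simp [hc]
  · simpa [e] using single_mem_supported ℂ c (hs hc)

lemma e_ne_zero (k : ℕ) (μ ν : Fin 2) : e k μ ν ≠ 0 := by
  simp [e]

lemma exists_smul_e_eq_of_mem_supported {k : ℕ} {μ ν : Fin 2} {w : Mmod}
    (hw : w ∈ supported ℂ ℂ {(k, μ, ν)}) : ∃ a : ℂ, a • e k μ ν = w := by
  rwa [supported_eq_span_single, Set.image_singleton, mem_span_singleton] at hw

lemma exists_smul_e_add_smul_e_eq_of_mem_supported {k k' : ℕ} {μ ν μ' ν' : Fin 2} {w : Mmod}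
    (hw : w ∈ supported ℂ ℂ {(k, μ, ν), (k', μ', ν')}) :
    ∃ a b : ℂ, a • e k μ ν + b • e k' μ' ν' = w := by
  rwa [supported_eq_span_single, Set.image_pair, mem_span_pair] at hw

lemma exists_weightClass_component {h f : ℂ} {p : Submodule ℂ Mmod}
    (hN : ∀ v ∈ p, Nop h v ∈ p) (hF : ∀ v ∈ p, Fop f v ∈ p) {v : Mmod} (hv : v ∈ p)
    (i : Idx) :
    ∃ w ∈ p, w i = v i ∧ w ∈ supported ℂ ℂ (weightClass i) := by
  classical
  have hlevel := Submodule.filter_mem_of_diagonal (Nop_apply h) hN hv (h + level i)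
  have hweight := Submodule.filter_mem_of_diagonal (Fop_apply f) hF hlevel (f + charge i)
  refine ⟨_, hweight, by simp, fun j hj => ?_⟩
  simp only [Finset.mem_coe, mem_support_iff, filter_apply] at hj
  split_ifs at hj <;> simp_all [weightClass]

def HasNonzeroBelow (p : Submodule ℂ Mmod) (L : ℕ) : Prop :=
  ∃ u ∈ p, u ≠ 0 ∧ u ∈ supported ℂ ℂ {j | level j < L}

lemma HasNonzeroBelow.mono {p : Submodule ℂ Mmod} {L L' : ℕ} (hp : HasNonzeroBelow p L)
    (hL : L ≤ L') : HasNonzeroBelow p L' := by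
  obtain ⟨u, hu, hu0, huL⟩ := hp
  exact ⟨u, hu, hu0, supported_mono (fun j (hj : level j < L) => hj.trans_le hL) huL⟩

lemma hasNonzeroBelow_support_sup {p : Submodule ℂ Mmod} {v : Mmod} (hv : v ∈ p)
    (hv0 : v ≠ 0) :
    HasNonzeroBelow p (v.support.sup level + 1) :=
  ⟨v, hv, hv0, fun _ hj => Nat.lt_succ_of_le (Finset.le_sup hj)⟩

lemma not_hasNonzeroBelow_zero (p : Submodule ℂ Mmod) : ¬HasNonzeroBelow p 0 := by
  rintro ⟨u, -, hu0, hu⟩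
  simp_all

section Descent

variable {h f : ℂ} {p : Submodule ℂ Mmod} {a : ℂ} {k : ℕ}

lemma hasNonzeroBelow_of_smul_e01_mem (hhf : h + f ≠ 0) (hcm : ∀ v ∈ p, cm h f v ∈ p)
    (ha : a ≠ 0) (hw : a • e k 0 1 ∈ p) : HasNonzeroBelow p (level (k, 0, 1)) := by
  have hu : cm h f (a • e k 0 1) =
      (a * (2 * (h + f))) • e k 0 0 + (a * (2 * k)) • e (k - 1) 1 1 := by
    rw [map_smul, cm_e01, smul_add, smul_smul, smul_smul]
  refine ⟨_, hcm _ hw, fun hu0 => ?_, ?_⟩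
  · simpa [e, ha, hhf] using congr($(hu.symm.trans hu0) (k, 0, 0))
  · rw [hu]
    refine add_mem (smul_e_mem_supported fun _ => by simp [level])
      (smul_e_mem_supported fun hb => ?_)
    have : k ≠ 0 := by rintro rfl; simp at hb
    simp [level]; omega

lemma hasNonzeroBelow_of_smul_e10_mem (hhf : h ≠ f) (hcp : ∀ v ∈ p, cp h f v ∈ p)
    (ha : a ≠ 0) (hw : a • e k 1 0 ∈ p) : HasNonzeroBelow p (level (k, 1, 0)) := by
  have hu : cp h f (a • e k 1 0) =
      (a * (2 * (h + 2 * k - f))) • e k 0 0 + (a * -(2 * k)) • e (k - 1) 1 1 := by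
    rw [map_smul, cp_e10, smul_add, smul_smul, smul_smul]
  refine ⟨_, hcp _ hw, fun hu0 => ?_, ?_⟩
  · have h00 := congr($(hu.symm.trans hu0) (k, 0, 0))
    have h11 := congr($(hu.symm.trans hu0) (k - 1, 1, 1))
    simp [e, ha] at h00 h11
    subst h11
    exact hhf (by simpa [sub_eq_zero] using h00)
  · rw [hu]
    refine add_mem (smul_e_mem_supported fun _ => by simp [level])
      (smul_e_mem_supported fun hb => ?_)
    have : k ≠ 0 := by rintro rfl; simp at hb
    simp [level]; omega

lemma hasNonzeroBelow_of_even_mem (hK : h + (k + 1) ≠ 0) (hcp : ∀ v ∈ p, cp h f v ∈ p)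
    (hcm : ∀ v ∈ p, cm h f v ∈ p) {b : ℂ} (hw : a • e (k + 1) 0 0 + b • e k 1 1 ∈ p)
    (hw0 : a • e (k + 1) 0 0 + b • e k 1 1 ≠ 0) :
    HasNonzeroBelow p (level (k + 1, 0, 0)) := by
  set w := a • e (k + 1) 0 0 + b • e k 1 1
  have hcpw : cp h f w = (a * (2 * (k + 1)) + b * (2 * (h + 2 * k + 2 - f))) • e k 0 1 := by
    simp only [w, map_add, map_smul, cp_e00_succ, cp_e11, smul_smul, add_smul]
  have hcmw : cm h f w = (a * (2 * (k + 1)) + b * -(2 * (h + f))) • e k 1 0 := by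
    simp only [w, map_add, map_smul, cm_e00_succ, cm_e11, smul_smul, add_smul]
  have hlevel (μ ν : Fin 2) (hμν : (μ : ℕ) + ν = 1) :
      (k, μ, ν) ∈ {j | level j < level (k + 1, 0, 0)} := by
    simp [level]; omega
  by_cases hα : a * (2 * (k + 1)) + b * (2 * (h + 2 * k + 2 - f)) = 0
  · refine ⟨_, hcm _ hw, ?_, ?_⟩
    · rw [hcmw]
      refine smul_ne_zero (fun hβ => hw0 ?_) (e_ne_zero _ _ _)
      have hb : b = 0 := by
        have : b * (4 * (h + (k + 1))) = 0 := by linear_combination hα - hβ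
        simpa [hK] using this
      have ha : a = 0 := by simpa [hb, Nat.cast_add_one_ne_zero] using hα
      simp [w, ha, hb]
    · rw [hcmw]; exact smul_e_mem_supported fun _ => hlevel 1 0 rfl
  · refine ⟨_, hcp _ hw, ?_, ?_⟩
    · rw [hcpw]; exact smul_ne_zero hα (e_ne_zero _ _ _)
    · rw [hcpw]; exact smul_e_mem_supported fun _ => hlevel 0 1 rfl


lemma e000_mem_or_hasNonzeroBelow (h1 : h ≠ f) (hhf : h + f ≠ 0)
    (hK : ∀ k : ℕ, h + (k + 1) ≠ 0) (hcp : ∀ v ∈ p, cp h f v ∈ p)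
    (hcm : ∀ v ∈ p, cm h f v ∈ p) {w : Mmod} (hw : w ∈ p) (hw0 : w ≠ 0) (i : Idx)
    (hwi : w ∈ supported ℂ ℂ (weightClass i)) :
    e 0 0 0 ∈ p ∨ HasNonzeroBelow p (level i) := by
  match i with
  | (0, 0, 0) =>
    rw [weightClass_zero] at hwi
    obtain ⟨a, rfl⟩ := exists_smul_e_eq_of_mem_supported hwi
    exact .inl ((p.smul_mem_iff (left_ne_zero_of_smul hw0)).1 hw)
  | (k + 1, 0, 0) =>
    rw [weightClass_e00_succ] at hwi
    obtain ⟨a, b, rfl⟩ := exists_smul_e_add_smul_e_eq_of_mem_supported hwi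
    exact .inr (hasNonzeroBelow_of_even_mem (hK k) hcp hcm hw hw0)
  | (k, 1, 1) =>
    rw [weightClass_e11] at hwi
    obtain ⟨a, b, rfl⟩ := exists_smul_e_add_smul_e_eq_of_mem_supported hwi
    exact .inr ((hasNonzeroBelow_of_even_mem (hK k) hcp hcm hw hw0).mono (by simp [level]; omega))
  | (k, 0, 1) =>
    rw [weightClass_e01] at hwi
    obtain ⟨a, rfl⟩ := exists_smul_e_eq_of_mem_supported hwi
    exact .inr (hasNonzeroBelow_of_smul_e01_mem hhf hcm (left_ne_zero_of_smul hw0) hw)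
  | (k, 1, 0) =>
    rw [weightClass_e10] at hwi
    obtain ⟨a, rfl⟩ := exists_smul_e_eq_of_mem_supported hwi
    exact .inr (hasNonzeroBelow_of_smul_e10_mem h1 hcp (left_ne_zero_of_smul hw0) hw)

lemma e000_mem_of_hasNonzeroBelow (h1 : h ≠ f) (hhf : h + f ≠ 0)
    (hK : ∀ k : ℕ, h + (k + 1) ≠ 0) (hN : ∀ v ∈ p, Nop h v ∈ p)
    (hF : ∀ v ∈ p, Fop f v ∈ p) (hcp : ∀ v ∈ p, cp h f v ∈ p)
    (hcm : ∀ v ∈ p, cm h f v ∈ p) {L : ℕ} (hL : HasNonzeroBelow p L) : e 0 0 0 ∈ p := by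
  induction L with
  | zero => exact absurd hL (not_hasNonzeroBelow_zero p)
  | succ L ih =>
    obtain ⟨v, hv, hv0, hvL⟩ := hL
    obtain ⟨i, hi⟩ := support_nonempty_iff.2 hv0
    obtain ⟨w, hw, hwv, hwi⟩ := exists_weightClass_component hN hF hv i
    have hw0 : w ≠ 0 := fun hw0 => mem_support_iff.1 hi (by rw [← hwv, hw0, Finsupp.zero_apply])
    refine (e000_mem_or_hasNonzeroBelow h1 hhf hK hcp hcm hw hw0 i hwi).elim id fun hlow => ?_
    exact ih (hlow.mono (Nat.le_of_lt_succ (hvL hi)))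

end Descent

lemma e_mem_of_e000_mem {p : Submodule ℂ Mmod} (hAp : ∀ v ∈ p, Ap v ∈ p)
    (hdp : ∀ v ∈ p, dp v ∈ p) (hdm : ∀ v ∈ p, dm v ∈ p) (h0 : e 0 0 0 ∈ p) :
    ∀ k μ ν, e k μ ν ∈ p := by
  have he00 (k : ℕ) : e k 0 0 ∈ p := by
    induction k with
    | zero => exact h0
    | succ k ih => simpa [Ap_e] using hAp _ ih
  have he0 (k : ℕ) : ∀ ν, e k 0 ν ∈ p
    | 0 => he00 k
    | 1 => by simpa [dm_e00] using hdm _ (he00 k)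
  intro k μ ν
  match μ with
  | 0 => exact he0 k ν
  | 1 => simpa [dp_e0] using hdp _ (he0 k ν)

lemma eq_top_of_forall_e_mem {p : Submodule ℂ Mmod} (hp : ∀ k μ ν, e k μ ν ∈ p) :
    p = ⊤ := by
  rw [eq_top_iff, ← supported_univ, supported_eq_span_single, span_le]
  rintro _ ⟨⟨k, μ, ν⟩, -, rfl⟩
  exact hp k μ ν

lemma add_natCast_succ_ne_zero {h f : ℂ} (h2 : h ≠ -f)
    (h3 : ∀ n : ℕ, 1 ≤ n → h ≠ -(n : ℂ) ∨ f = (n : ℂ)) (k : ℕ) :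
    h + (k + 1) ≠ 0 := by
  intro hk
  rcases h3 (k + 1) k.succ_pos with h3 | h3 <;> push_cast at h3
  · exact h3 (by linear_combination hk)
  · exact h2 (by rw [h3]; linear_combination hk)

end Verma

open Verma

theorem verma_module_irreducible_general (h f : ℂ)
    (h1 : h ≠ f) (h2 : h ≠ -f)
    (h3 : ∀ n : ℕ, 1 ≤ n → h ≠ -(n : ℂ) ∨ f = (n : ℂ))
    (p : Submodule ℂ Mmod)
    (hN : ∀ v ∈ p, Nop h v ∈ p) (hF : ∀ v ∈ p, Fop f v ∈ p)
    (hAp : ∀ v ∈ p, Ap v ∈ p)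
    (hcp : ∀ v ∈ p, cp h f v ∈ p) (hcm : ∀ v ∈ p, cm h f v ∈ p)
    (hdp : ∀ v ∈ p, dp v ∈ p) (hdm : ∀ v ∈ p, dm v ∈ p) :
    p = ⊥ ∨ p = ⊤ := by
  refine or_iff_not_imp_left.2 fun hp => ?_
  obtain ⟨v, hv, hv0⟩ := (Submodule.ne_bot_iff p).1 hp
  have hhf : h + f ≠ 0 := fun hc => h2 (eq_neg_of_add_eq_zero_left hc)
  have h0 : e 0 0 0 ∈ p :=
    e000_mem_of_hasNonzeroBelow h1 hhf (add_natCast_succ_ne_zero h2 h3) hN hF hcp hcm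
      (hasNonzeroBelow_support_sup hv hv0)
  exact eq_top_of_forall_e_mem (e_mem_of_e000_mem hAp hdp hdm h0)

/-- Corollary 3.4: if `h ≠ ±f` and, for every positive integer `n`, `h ≠ −n` or
`f = n`, then the Verma module `M(h,f)` is irreducible: its only subspaces
invariant under `N`, `F̃`, `A₊`, `A₋`, `c₊`, `c₋`, `d₊`, `d₋` are `⊥` and `⊤`. -/
theorem verma_module_irreducible (h f : ℂ)
    (h1 : h ≠ f) (h2 : h ≠ -f)
    (h3 : ∀ n : ℕ, 1 ≤ n → h ≠ -(n : ℂ) ∨ f = (n : ℂ))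
    (p : Submodule ℂ Mmod)
    (hN : ∀ v ∈ p, Nop h v ∈ p) (hF : ∀ v ∈ p, Fop f v ∈ p)
    (hAp : ∀ v ∈ p, Ap v ∈ p) (hAm : ∀ v ∈ p, Am h f v ∈ p)
    (hcp : ∀ v ∈ p, cp h f v ∈ p) (hcm : ∀ v ∈ p, cm h f v ∈ p)
    (hdp : ∀ v ∈ p, dp v ∈ p) (hdm : ∀ v ∈ p, dm v ∈ p) :
    p = ⊥ ∨ p = ⊤ :=
  verma_module_irreducible_general h f h1 h2 h3 p hN hF hAp hcp hcm hdp hdm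
end
end

section
/- (Verma module realizes the relation {d₊, d₋} = 2A₊) As linear operators on M, the anticommutator identity d₊ ∘ d₋ + d₋ ∘ d₊ = 2·A₊ holds. -/
/-!
Verma module `M(h,f)` over the ℤ₂×ℤ₂ graded superalgebra of Rittenberg–Wyler,
realized on the space of finitely supported functions `ℕ × Fin 2 × Fin 2 →₀ ℂ`,
with basis vectors `e k μ ν`.
-/

noncomputable section

theorem Mmod.linearMap_ext {f g : Mmod →ₗ[ℂ] Mmod}
    (hfg : ∀ (k : ℕ) (μ ν : Fin 2), f (e k μ ν) = g (e k μ ν)) : f = g :=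
  Finsupp.basisSingleOne.ext fun ⟨k, μ, ν⟩ => hfg k μ ν

theorem anticommutator_dp_dm_e (k : ℕ) (μ ν : Fin 2) :
    dp (dm (e k μ ν)) + dm (dp (e k μ ν)) = (2 : ℂ) • e (k + 1) μ ν := by
  fin_cases μ <;> fin_cases ν <;> simp [dp, dm, mkOp_e, two_smul]

/-- The Verma module realizes the relation `{d₊, d₋} = 2A₊`. -/
theorem anticommutator_dp_dm :
    dp ∘ₗ dm + dm ∘ₗ dp = (2 : ℂ) • Ap :=
  Mmod.linearMap_ext fun k μ ν => by
    simpa [Ap, mkOp_e] using anticommutator_dp_dm_e k μ ν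
end
end
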